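/- arXiv:1701.04757 — 2 statements merged into one kernel-verified Lean document; each statement's English description precedes it below -/
import Mathlib

section
/- Let $H$ be a finite group with $S_\ell(H) = H$, let $P \trianglelefteq H$ be an $\ell$-group, and let $N \trianglelefteq H$. Assume every finite simple quotient of $H/P$ belongs to a class $\mathcal{C}$ of simple groups, and no composition factor of $H/N$ belongs to $\mathcal{C}$. Then $H = N \cdot P$, and consequently $N$ is generated by its $\ell$-Sylow subgroups. -/
/-- The normal subgroup of `G` generated by all `ℓ`-Sylow subgroups of `G`. -/
def sylowGen (ℓ : ℕ) (G : Type*) [Group G] : Subgroup G :=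
  Subgroup.normalClosure (⋃ P : Sylow ℓ G, ((P : Subgroup G) : Set G))

/-- `S` is a finite simple quotient of `G`: `S` is simple and isomorphic to `G ⧸ N`
for some normal subgroup `N` of `G`. -/
def IsFiniteSimpleQuotient (G : Type*) [Group G] (S : Type*) [Group S] : Prop :=
  IsSimpleGroup S ∧ ∃ (N : Subgroup G) (hN : N.Normal), Nonempty ((G ⧸ N) ≃* S)

/-- `S` is a composition factor of `G`: there is a composition series of `G`
(a chain from `⊥` to `⊤` in which each term is normal in the next with simple
quotient) one of whose factors is isomorphic to `S`. -/
def IsCompositionFactor (G : Type*) [Group G] (S : Type*) [Group S] : Prop :=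
  ∃ (n : ℕ) (c : Fin (n + 1) → Subgroup G),
    c 0 = ⊥ ∧ c (Fin.last n) = ⊤ ∧
    (∀ i : Fin n, c i.castSucc ≤ c i.succ) ∧
    (∀ i : Fin n, ∃ hn : ((c i.castSucc).subgroupOf (c i.succ)).Normal,
      IsSimpleGroup ((c i.succ) ⧸ (c i.castSucc).subgroupOf (c i.succ))) ∧
    ∃ i : Fin n, ∃ hn : ((c i.castSucc).subgroupOf (c i.succ)).Normal,
      Nonempty (((c i.succ) ⧸ (c i.castSucc).subgroupOf (c i.succ)) ≃* S)

open Subgroup QuotientGroup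

section AuxSimpleQuotient

/-- Transfer `IsSimpleGroup` along a `MulEquiv`. -/
lemma aux_isSimpleGroup_of_mulEquiv {G H : Type*} [Group G] [Group H] (e : G ≃* H)
    [IsSimpleGroup G] : IsSimpleGroup H := by
  haveI : Nontrivial H := e.symm.toEquiv.nontrivial
  exact IsSimpleGroup.isSimpleGroup_of_surjective e.toMonoidHom e.surjective

/-- Every nontrivial finite group has a simple quotient. -/
lemma aux_exists_simple_quotient (G : Type*) [Group G] [Finite G] [Nontrivial G] :
    ∃ M : Subgroup G, ∃ _ : M.Normal, M ≠ ⊤ ∧ IsSimpleGroup (G ⧸ M) := by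
  obtain ⟨M, hMmem, hmax⟩ :=
    Set.Finite.exists_maximalFor id {M : Subgroup G | M.Normal ∧ M ≠ ⊤} (Set.toFinite _)
      ⟨⊥, inferInstance, bot_ne_top⟩
  obtain ⟨hMn, hMt⟩ := hMmem
  haveI := hMn
  have hnt : Nontrivial (G ⧸ M) := by
    obtain ⟨x, hx⟩ := not_forall.mp (fun h => hMt ((Subgroup.eq_top_iff' M).mpr h))
    exact ⟨⟨(x : G ⧸ M), 1, by simpa [QuotientGroup.eq_one_iff] using hx⟩⟩
  refine ⟨M, hMn, hMt, ⟨fun A hA => ?_⟩⟩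
  have hkA : M ≤ comap (mk' M) A :=
    le_trans (le_of_eq (QuotientGroup.ker_mk' M).symm) (Subgroup.ker_le_comap _ _)
  by_cases htop : comap (mk' M) A = ⊤
  · right
    rw [← Subgroup.map_comap_eq_self_of_surjective (mk'_surjective M) A, htop,
      Subgroup.map_top_of_surjective _ (mk'_surjective M)]
  · left
    have hMeq : M = comap (mk' M) A := le_antisymm hkA (hmax ⟨hA.comap _, htop⟩ hkA)
    rw [← Subgroup.map_comap_eq_self_of_surjective (mk'_surjective M) A, ← hMeq,
      Subgroup.map_eq_bot_iff, QuotientGroup.ker_mk' M]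

/-- If `K` is a proper normal subgroup of a finite group `G`, there is a normal
subgroup `M ⊇ K` with simple quotient. -/
lemma aux_exists_simple_quotient_above {G : Type*} [Group G] [Finite G] (K : Subgroup G)
    [K.Normal] (hK : K ≠ ⊤) :
    ∃ M : Subgroup G, ∃ _ : M.Normal, K ≤ M ∧ IsSimpleGroup (G ⧸ M) := by
  haveI : Nontrivial (G ⧸ K) := by
    obtain ⟨x, hx⟩ := not_forall.mp (fun h => hK ((Subgroup.eq_top_iff' K).mpr h))
    exact ⟨⟨(x : G ⧸ K), 1, by simpa [QuotientGroup.eq_one_iff] using hx⟩⟩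
  obtain ⟨M₀, hM₀n, hM₀t, hM₀s⟩ := aux_exists_simple_quotient (G ⧸ K)
  haveI := hM₀n
  have hKM : K ≤ comap (mk' K) M₀ :=
    le_trans (le_of_eq (QuotientGroup.ker_mk' K).symm) (Subgroup.ker_le_comap _ _)
  haveI hMn : (comap (mk' K) M₀).Normal := hM₀n.comap _
  have hmc : Subgroup.map (mk' K) (comap (mk' K) M₀) = M₀ :=
    Subgroup.map_comap_eq_self_of_surjective (mk'_surjective K) M₀
  haveI : (Subgroup.map (mk' K) (comap (mk' K) M₀)).Normal := by rw [hmc]; exact hM₀n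
  have e := (quotientQuotientEquivQuotient K (comap (mk' K) M₀) hKM).symm.trans
    (quotientMulEquivOfEq hmc)
  exact ⟨comap (mk' K) M₀, hMn, hKM, aux_isSimpleGroup_of_mulEquiv e.symm⟩

end AuxSimpleQuotient

section AuxSeries

/-- Extend a normal chain with simple factors by one step. -/
lemma aux_chain_snoc {G : Type*} [Group G] {n : ℕ} (c : Fin (n + 1) → Subgroup G)
    (T : Subgroup G)
    (hmono : ∀ i : Fin n, c i.castSucc ≤ c i.succ)
    (hfac : ∀ i : Fin n, ∃ _ : ((c i.castSucc).subgroupOf (c i.succ)).Normal,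
        IsSimpleGroup ((c i.succ) ⧸ (c i.castSucc).subgroupOf (c i.succ)))
    (hle : c (Fin.last n) ≤ T)
    (hfacT : ∃ _ : ((c (Fin.last n)).subgroupOf T).Normal,
        IsSimpleGroup (T ⧸ (c (Fin.last n)).subgroupOf T)) :
    (∀ i : Fin (n + 1), (Fin.snoc c T : Fin (n + 2) → Subgroup G) i.castSucc ≤
        (Fin.snoc c T : Fin (n + 2) → Subgroup G) i.succ) ∧
    (∀ i : Fin (n + 1),
      ∃ _ : (((Fin.snoc c T : Fin (n + 2) → Subgroup G) i.castSucc).subgroupOf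
          ((Fin.snoc c T : Fin (n + 2) → Subgroup G) i.succ)).Normal,
        IsSimpleGroup (((Fin.snoc c T : Fin (n + 2) → Subgroup G) i.succ) ⧸
          ((Fin.snoc c T : Fin (n + 2) → Subgroup G) i.castSucc).subgroupOf
            ((Fin.snoc c T : Fin (n + 2) → Subgroup G) i.succ))) := by
  have key : ∀ i : Fin (n + 1),
      ((Fin.snoc c T : Fin (n + 2) → Subgroup G) i.castSucc ≤
        (Fin.snoc c T : Fin (n + 2) → Subgroup G) i.succ) ∧
      (∃ _ : (((Fin.snoc c T : Fin (n + 2) → Subgroup G) i.castSucc).subgroupOf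
          ((Fin.snoc c T : Fin (n + 2) → Subgroup G) i.succ)).Normal,
        IsSimpleGroup (((Fin.snoc c T : Fin (n + 2) → Subgroup G) i.succ) ⧸
          ((Fin.snoc c T : Fin (n + 2) → Subgroup G) i.castSucc).subgroupOf
            ((Fin.snoc c T : Fin (n + 2) → Subgroup G) i.succ))) := by
    intro i
    induction i using Fin.lastCases with
    | last =>
      have h1 : (Fin.snoc c T : Fin (n + 2) → Subgroup G) (Fin.last n).castSucc
          = c (Fin.last n) := by simp
      have h2 : (Fin.snoc c T : Fin (n + 2) → Subgroup G) (Fin.last n).succ = T := by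
        rw [Fin.succ_last]; simp
      rw [h1, h2]
      exact ⟨hle, hfacT⟩
    | cast j =>
      have h1 : (Fin.snoc c T : Fin (n + 2) → Subgroup G) j.castSucc.castSucc
          = c j.castSucc := by simp
      have h2 : (Fin.snoc c T : Fin (n + 2) → Subgroup G) j.castSucc.succ = c j.succ := by
        rw [Fin.succ_castSucc]; exact Fin.snoc_castSucc ..
      rw [h1, h2]
      exact ⟨hmono j, hfac j⟩
  exact ⟨fun i => (key i).1, fun i => (key i).2⟩

/-- Every subgroup of a finite group admits a composition series from `⊥` to it. -/
lemma aux_exists_series {G : Type*} [Group G] [Finite G] (K : Subgroup G) :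
    ∃ (n : ℕ) (c : Fin (n + 1) → Subgroup G),
      c 0 = ⊥ ∧ c (Fin.last n) = K ∧
      (∀ i : Fin n, c i.castSucc ≤ c i.succ) ∧
      (∀ i : Fin n, ∃ _ : ((c i.castSucc).subgroupOf (c i.succ)).Normal,
        IsSimpleGroup ((c i.succ) ⧸ (c i.castSucc).subgroupOf (c i.succ))) := by
  have main : ∀ (m : ℕ) (K : Subgroup G), Nat.card K ≤ m →
      ∃ (n : ℕ) (c : Fin (n + 1) → Subgroup G),
      c 0 = ⊥ ∧ c (Fin.last n) = K ∧
      (∀ i : Fin n, c i.castSucc ≤ c i.succ) ∧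
      (∀ i : Fin n, ∃ _ : ((c i.castSucc).subgroupOf (c i.succ)).Normal,
        IsSimpleGroup ((c i.succ) ⧸ (c i.castSucc).subgroupOf (c i.succ))) := by
    intro m
    induction m with
    | zero => intro K hK; have := Nat.card_pos (α := K); omega
    | succ m ih =>
      intro K hK
      by_cases hbot : K = ⊥
      · exact ⟨0, fun _ => ⊥, rfl, by rw [hbot], fun i => i.elim0, fun i => i.elim0⟩
      · haveI : Nontrivial K := (Subgroup.nontrivial_iff_ne_bot K).mpr hbot
        obtain ⟨M₀, hM₀n, hM₀t, hM₀s⟩ := aux_exists_simple_quotient K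
        haveI := hM₀n
        have hLK : M₀.map K.subtype ≤ K := Subgroup.map_subtype_le M₀
        have hcard : Nat.card (M₀.map K.subtype) ≤ m := by
          have h1 : Nat.card (M₀.map K.subtype) = Nat.card M₀ :=
            (Nat.card_congr (Subgroup.equivMapOfInjective M₀ K.subtype
              K.subtype_injective).toEquiv).symm
          have h2 : Nat.card M₀ ∣ Nat.card K := Subgroup.card_subgroup_dvd_card M₀
          have h3 : Nat.card M₀ ≠ Nat.card K := fun h => hM₀t (Subgroup.eq_top_of_card_eq M₀ h)
          have h4 : (0:ℕ) < Nat.card K := Nat.card_pos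
          have := Nat.le_of_dvd h4 h2
          omega
        obtain ⟨n, c, hc0, hclast, hcmono, hcfac⟩ := ih (M₀.map K.subtype) hcard
        have hsubOf : (M₀.map K.subtype).subgroupOf K = M₀ :=
          Subgroup.comap_map_eq_self_of_injective K.subtype_injective M₀
        have hfacT : ∃ _ : ((c (Fin.last n)).subgroupOf K).Normal,
            IsSimpleGroup (K ⧸ (c (Fin.last n)).subgroupOf K) := by
          rw [hclast, hsubOf]; exact ⟨hM₀n, hM₀s⟩
        obtain ⟨hmono', hfac'⟩ := aux_chain_snoc c K hcmono hcfac (hclast ▸ hLK) hfacT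
        refine ⟨n + 1, Fin.snoc c K, ?_, ?_, hmono', hfac'⟩
        · rw [show (0 : Fin (n + 2)) = (0 : Fin (n+1)).castSucc by rfl, Fin.snoc_castSucc]
          exact hc0
        · simp
  exact main (Nat.card K) K le_rfl

/-- The quotient of `⊤` by `M.subgroupOf ⊤` is isomorphic to `G ⧸ M`. -/
noncomputable def auxTopQuotientEquiv {G : Type*} [Group G] (M : Subgroup G) [M.Normal] :
    ((⊤ : Subgroup G) ⧸ M.subgroupOf ⊤) ≃* G ⧸ M :=
  QuotientGroup.congr (M.subgroupOf ⊤) M Subgroup.topEquiv (by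
    ext x
    simp only [Subgroup.mem_map, Subgroup.mem_subgroupOf]
    constructor
    · rintro ⟨y, hy, rfl⟩; exact hy
    · intro hx; exact ⟨⟨x, trivial⟩, hx, rfl⟩)

/-- Variant where the top subgroup is given by an equation. -/
noncomputable def auxTopQuotientEquiv' {G : Type*} [Group G] (M T : Subgroup G) [M.Normal]
    (hT : T = ⊤) : ((T : Subgroup G) ⧸ M.subgroupOf T) ≃* G ⧸ M := by
  subst hT; exact auxTopQuotientEquiv M

/-- A simple quotient of a finite group is a composition factor. -/
lemma aux_isCompositionFactor_of_simple_quotient {G : Type*} [Group G] [Finite G]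
    (M : Subgroup G) [hM : M.Normal] (hs : IsSimpleGroup (G ⧸ M))
    (S : Type*) [Group S] (e : (G ⧸ M) ≃* S) : IsCompositionFactor G S := by
  obtain ⟨n, c, hc0, hclast, hcmono, hcfac⟩ := aux_exists_series M
  have hfacT : ∃ _ : ((c (Fin.last n)).subgroupOf (⊤ : Subgroup G)).Normal,
      IsSimpleGroup ((⊤ : Subgroup G) ⧸ (c (Fin.last n)).subgroupOf ⊤) := by
    rw [hclast]
    exact ⟨inferInstance, aux_isSimpleGroup_of_mulEquiv (auxTopQuotientEquiv M).symm⟩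
  obtain ⟨hmono', hfac'⟩ := aux_chain_snoc c ⊤ hcmono hcfac le_top hfacT
  refine ⟨n + 1, Fin.snoc c ⊤, ?_, by simp, hmono', hfac', Fin.last n, ?_⟩
  · rw [show (0 : Fin (n + 2)) = (0 : Fin (n+1)).castSucc by rfl, Fin.snoc_castSucc]
    exact hc0
  · have h1 : (Fin.snoc c ⊤ : Fin (n + 2) → Subgroup G) (Fin.last n).castSucc = M := by
      simpa using hclast
    have h2 : (Fin.snoc c ⊤ : Fin (n + 2) → Subgroup G) (Fin.last n).succ = ⊤ := by
      rw [Fin.succ_last]; simp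
    rw [h1, h2]
    exact ⟨inferInstance, ⟨(auxTopQuotientEquiv M).trans e⟩⟩

end AuxSeries

section AuxSylowGen

lemma aux_sylowGen_normal {ℓ : ℕ} {G : Type*} [Group G] : (sylowGen ℓ G).Normal :=
  Subgroup.normalClosure_normal

lemma aux_sylow_le_sylowGen {ℓ : ℕ} {G : Type*} [Group G] (S : Sylow ℓ G) :
    (S : Subgroup G) ≤ sylowGen ℓ G :=
  fun _ hx => Subgroup.subset_normalClosure (Set.mem_iUnion.mpr ⟨S, hx⟩)

lemma aux_pgroup_le_sylowGen {ℓ : ℕ} {G : Type*} [Group G] {K : Subgroup G}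
    (hK : IsPGroup ℓ K) : K ≤ sylowGen ℓ G := by
  obtain ⟨Q, hQ⟩ := hK.exists_le_sylow
  exact hQ.trans (aux_sylow_le_sylowGen Q)

lemma aux_sylowGen_eq_top_of_surjective {ℓ : ℕ} {G G' : Type*} [Group G] [Group G']
    (f : G →* G') (hf : Function.Surjective f) (h : sylowGen ℓ G = ⊤) :
    sylowGen ℓ G' = ⊤ := by
  haveI : (sylowGen ℓ G').Normal := aux_sylowGen_normal
  rw [eq_top_iff, ← Subgroup.map_top_of_surjective f hf, ← h]
  show Subgroup.map f (sylowGen ℓ G) ≤ sylowGen ℓ G'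
  rw [sylowGen, Subgroup.map_normalClosure _ _ hf]
  apply Subgroup.normalClosure_le_normal
  rintro x ⟨y, hy, rfl⟩
  obtain ⟨P, hyP⟩ := Set.mem_iUnion.mp hy
  have : f y ∈ Subgroup.map f (P : Subgroup G) := ⟨y, hyP, rfl⟩
  exact aux_pgroup_le_sylowGen (P.isPGroup'.map f) this

lemma aux_sylowGen_eq_top_of_quotient {ℓ : ℕ} {G : Type*} [Group G] (K : Subgroup G)
    [K.Normal] (hK : IsPGroup ℓ K) (h : sylowGen ℓ (G ⧸ K) = ⊤) :
    sylowGen ℓ G = ⊤ := by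
  haveI hTn : (sylowGen ℓ G).Normal := aux_sylowGen_normal
  have hKT : K ≤ sylowGen ℓ G := aux_pgroup_le_sylowGen hK
  haveI : (Subgroup.map (mk' K) (sylowGen ℓ G)).Normal :=
    hTn.map _ (mk'_surjective K)
  have hmap : Subgroup.map (mk' K) (sylowGen ℓ G) = ⊤ := by
    rw [eq_top_iff, ← h]
    apply Subgroup.normalClosure_le_normal
    rintro x hx
    obtain ⟨Q, hxQ⟩ := Set.mem_iUnion.mp hx
    have hQp : IsPGroup ℓ (Subgroup.comap (mk' K) (Q : Subgroup (G ⧸ K))) := by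
      apply Q.isPGroup'.comap_of_ker_isPGroup
      rw [QuotientGroup.ker_mk']
      exact hK
    have hle : Subgroup.comap (mk' K) (Q : Subgroup (G ⧸ K)) ≤ sylowGen ℓ G :=
      aux_pgroup_le_sylowGen hQp
    have : (Q : Subgroup (G ⧸ K)) ≤ Subgroup.map (mk' K) (sylowGen ℓ G) := by
      rw [← Subgroup.map_comap_eq_self_of_surjective (mk'_surjective K) (Q : Subgroup (G ⧸ K))]
      exact Subgroup.map_mono hle
    exact this hxQ
  have := congrArg (Subgroup.comap (mk' K)) hmap
  rw [Subgroup.comap_map_eq, QuotientGroup.ker_mk', Subgroup.comap_top,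
    sup_eq_left.mpr hKT] at this
  exact this

end AuxSylowGen

theorem stmt_12 (ℓ : ℕ) (hℓ : ℓ.Prime) (H : Type) [Group H] [Finite H]
    (hgen : sylowGen ℓ H = ⊤)
    (P N : Subgroup H) (hP : P.Normal) (hPgrp : IsPGroup ℓ P) (hN : N.Normal)
    (C : (S : Type) → [inst : Group S] → Prop)
    (hCiso : ∀ (S T : Type) [Group S] [Group T], (S ≃* T) → C S → C T)
    (hFSQ : ∀ (S : Type) [Group S], IsFiniteSimpleQuotient (H ⧸ P) S → C S)
    (hCF : ∀ (S : Type) [Group S], IsCompositionFactor (H ⧸ N) S → ¬ C S) :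
    N ⊔ P = ⊤ ∧ sylowGen ℓ N = ⊤ := by
  haveI := hP
  haveI := hN
  have hsup : N ⊔ P = ⊤ := by
    by_contra hne
    obtain ⟨M, hMn, hKM, hMs⟩ := aux_exists_simple_quotient_above (N ⊔ P) hne
    haveI := hMn
    haveI := hMs
    have hPM : P ≤ M := le_trans le_sup_right hKM
    have hNM : N ≤ M := le_trans le_sup_left hKM
    haveI : (Subgroup.map (mk' P) M).Normal := hMn.map _ (mk'_surjective P)
    have hC : C (H ⧸ M) := hFSQ _ ⟨hMs, Subgroup.map (mk' P) M, inferInstance,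
      ⟨quotientQuotientEquivQuotient P M hPM⟩⟩
    haveI : (Subgroup.map (mk' N) M).Normal := hMn.map _ (mk'_surjective N)
    have e := quotientQuotientEquivQuotient N M hNM
    haveI : IsSimpleGroup ((H ⧸ N) ⧸ Subgroup.map (mk' N) M) :=
      aux_isSimpleGroup_of_mulEquiv e.symm
    exact hCF (H ⧸ M)
      (aux_isCompositionFactor_of_simple_quotient (Subgroup.map (mk' N) M)
        (by infer_instance) _ e) hC
  haveI hsubPN : (P.subgroupOf N).Normal := hP.subgroupOf N
  have hPsub : IsPGroup ℓ (P.subgroupOf N) := by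
    show IsPGroup ℓ (Subgroup.comap N.subtype P)
    apply hPgrp.comap_of_ker_isPGroup
    rw [Subgroup.ker_subtype]
    exact IsPGroup.of_bot
  have h1 : sylowGen ℓ (H ⧸ P) = ⊤ :=
    aux_sylowGen_eq_top_of_surjective (mk' P) (mk'_surjective P) hgen
  have E : ((N : Subgroup H) ⧸ P.subgroupOf N) ≃* H ⧸ P :=
    (QuotientGroup.quotientInfEquivProdNormalQuotient N P).trans
      (auxTopQuotientEquiv' P (N ⊔ P) hsup)
  have h2 : sylowGen ℓ ((N : Subgroup H) ⧸ P.subgroupOf N) = ⊤ :=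
    aux_sylowGen_eq_top_of_surjective E.symm.toMonoidHom E.symm.surjective h1
  exact ⟨hsup, aux_sylowGen_eq_top_of_quotient (P.subgroupOf N) hPsub h2⟩
end

section
/- Let $G$ be a group and $(\rho_\ell : G \to G_\ell)_{\ell \in L}$ a family of surjective homomorphisms onto finite groups indexed by a set $L$. Suppose that for all distinct $\ell_1, \ell_2 \in L$ the groups $G_{\ell_1}$ and $G_{\ell_2}$ have no common finite simple quotient (up to isomorphism). Then for every finite subset $S \subseteq L$ the induced homomorphism $G \to \prod_{\ell \in S} G_\ell$ is surjective. -/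
/-! The image of `G` in `A × B`, with `A = ∏_{l ∈ S} G_l` and `B = G_a`, projects onto both
factors, so by Goursat's lemma it is the preimage of the graph of an isomorphism
`A ⧸ M ≃* B ⧸ N`. If it is proper, `B ⧸ N` is nontrivial and any simple quotient of it is a common
simple quotient of `A` and `B`. A simple quotient of the product `A` is already a quotient of a
single factor `G_l`, `l ∈ S`, because the images of the factors are normal subgroups generating it.
Induction on `S` concludes. -/

open Function

universe u

theorem exists_surjective_onto_isSimpleGroup (Q : Type u) [Group Q] [Finite Q] [Nontrivial Q] :
    ∃ (T : Type u) (_ : Group T) (f : Q →* T), IsSimpleGroup T ∧ Surjective f := by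
  induction hn : Nat.card Q using Nat.strong_induction_on generalizing Q with
  | _ n ih =>
  by_cases hQ : IsSimpleGroup Q
  · exact ⟨Q, _, MonoidHom.id Q, hQ, surjective_id⟩
  obtain ⟨N, hN, hbot, htop⟩ : ∃ N : Subgroup Q, N.Normal ∧ N ≠ ⊥ ∧ N ≠ ⊤ := by
    simpa [isSimpleGroup_iff, ‹Nontrivial Q›, not_or, and_assoc] using hQ
  have : Nontrivial (Q ⧸ N) := QuotientGroup.nontrivial_iff.mpr htop
  have hlt : Nat.card (Q ⧸ N) < n := by
    rw [← hn, ← Subgroup.card_mul_index N, Subgroup.index_eq_card]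
    exact lt_mul_of_one_lt_left Nat.card_pos (N.one_lt_card_iff_ne_bot.mpr hbot)
  obtain ⟨T, _, f, hT, hf⟩ := ih _ hlt (Q ⧸ N) rfl
  exact ⟨T, _, f.comp (QuotientGroup.mk' N), hT, hf.comp (QuotientGroup.mk'_surjective N)⟩

theorem Pi.mulSingle_conj {ι : Type*} [DecidableEq ι] {M : ι → Type*} [∀ i, Group (M i)]
    (y : ∀ i, M i) (i : ι) (x : M i) :
    y * Pi.mulSingle i x * y⁻¹ = Pi.mulSingle i (y i * x * (y i)⁻¹) := by
  funext j
  by_cases hj : j = i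
  · subst hj; simp
  · simp [Pi.mulSingle_eq_of_ne hj]

theorem MonoidHom.normal_range_mulSingle {ι : Type*} [DecidableEq ι] (M : ι → Type*)
    [∀ i, Group (M i)] (i : ι) : (MonoidHom.mulSingle M i).range.Normal :=
  ⟨by rintro _ ⟨x, rfl⟩ y; exact ⟨_, (Pi.mulSingle_conj y i x).symm⟩⟩

theorem exists_surjective_comp_mulSingle_of_isSimpleGroup {ι : Type*} [Finite ι] [DecidableEq ι]
    {M : ι → Type*} [∀ i, Group (M i)] {T : Type*} [Group T] [IsSimpleGroup T]
    (f : (∀ i, M i) →* T) (hf : Surjective f) :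
    ∃ i, Surjective (f.comp (MonoidHom.mulSingle M i)) := by
  by_contra! h
  have hsingle : ∀ i, f.comp (MonoidHom.mulSingle M i) = 1 := fun i => by
    rw [← MonoidHom.range_eq_bot_iff, MonoidHom.range_comp]
    exact ((MonoidHom.normal_range_mulSingle M i).map f hf).eq_bot_or_eq_top.resolve_right
      fun htop => h i (by rwa [← MonoidHom.range_eq_top, MonoidHom.range_comp])
  have hf1 : f = 1 := MonoidHom.pi_ext fun i x => DFunLike.congr_fun (hsingle i) x
  obtain ⟨t, ht⟩ := exists_ne (1 : T)
  obtain ⟨x, rfl⟩ := hf t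
  exact ht (by rw [hf1]; rfl)

theorem Subgroup.eq_top_of_goursatSnd_eq_top {A B : Type*} [Group A] [Group B]
    {I : Subgroup (A × B)} (h₁ : Surjective (Prod.fst ∘ I.subtype)) (h : I.goursatSnd = ⊤) :
    I = ⊤ := by
  refine eq_top_iff.mpr fun ⟨a, b⟩ _ => ?_
  obtain ⟨⟨⟨a', b'⟩, hab'⟩, rfl : a' = a⟩ := h₁ a
  have hb : ((1 : A), b'⁻¹ * b) ∈ I := mem_goursatSnd.mp (h ▸ mem_top _)
  simpa using I.mul_mem hab' hb

theorem exists_common_simple_quotient_of_not_surjective_prod {G A : Type*} {B : Type u}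
    [Group G] [Group A] [Group B] [Finite B] {φ : G →* A} {ψ : G →* B}
    (hφ : Surjective φ) (hψ : Surjective ψ) (h : ¬ Surjective (φ.prod ψ)) :
    ∃ (T : Type u) (_ : Group T) (f : A →* T) (g : B →* T),
      IsSimpleGroup T ∧ Surjective f ∧ Surjective g := by
  set I := (φ.prod ψ).range
  have h₁ : Surjective (Prod.fst ∘ I.subtype) := fun a =>
    let ⟨x, hx⟩ := hφ a; ⟨⟨_, x, rfl⟩, hx⟩
  have h₂ : Surjective (Prod.snd ∘ I.subtype) := fun b =>
    let ⟨x, hx⟩ := hψ b; ⟨⟨_, x, rfl⟩, hx⟩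
  have := Subgroup.normal_goursatFst h₁
  have := Subgroup.normal_goursatSnd h₂
  obtain ⟨e, -⟩ := Subgroup.goursat_surjective h₁ h₂
  have : Nontrivial (B ⧸ I.goursatSnd) := QuotientGroup.nontrivial_iff.mpr fun hsnd =>
    h (MonoidHom.range_eq_top.mp (I.eq_top_of_goursatSnd_eq_top h₁ hsnd))
  obtain ⟨T, _, q, hT, hq⟩ := exists_surjective_onto_isSimpleGroup (B ⧸ I.goursatSnd)
  exact ⟨T, _, q.comp (e.toMonoidHom.comp (QuotientGroup.mk' _)), q.comp (QuotientGroup.mk' _),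
    hT, hq.comp (e.surjective.comp (QuotientGroup.mk'_surjective _)),
    hq.comp (QuotientGroup.mk'_surjective _)⟩

theorem IsFiniteSimpleQuotient.of_surjective {X T : Type*} [Group X] [Group T] [IsSimpleGroup T]
    {f : X →* T} (hf : Surjective f) : IsFiniteSimpleQuotient X T :=
  ⟨‹_›, f.ker, inferInstance, ⟨QuotientGroup.quotientKerEquivOfSurjective f hf⟩⟩

theorem Finset.surjective_pi_insert {X ι : Type*} [DecidableEq ι] {M : ι → Type*}
    (f : ∀ i, X → M i) {a : ι} {S : Finset ι}
    (h : Surjective fun x => ((fun i : S => f i x), f a x)) :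
    Surjective fun x (i : (insert a S : Finset ι)) => f i x := by
  intro t
  obtain ⟨x, hx⟩ := h (fun i => t ⟨i, mem_insert_of_mem i.2⟩, t ⟨a, mem_insert_self a S⟩)
  refine ⟨x, funext fun ⟨i, hi⟩ => ?_⟩
  rcases mem_insert.mp hi with rfl | hi
  · exact congrArg Prod.snd hx
  · exact congrFun (congrArg Prod.fst hx) ⟨i, hi⟩

theorem stmt_13 (G : Type*) [Group G] (L : Type*) (Gf : L → Type)
    [∀ l, Group (Gf l)] [∀ l, Finite (Gf l)]
    (ρ : ∀ l, G →* Gf l) (hsurj : ∀ l, Function.Surjective (ρ l))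
    (hind : ∀ l₁ l₂ : L, l₁ ≠ l₂ → ∀ (S : Type) [Group S],
      IsFiniteSimpleQuotient (Gf l₁) S → IsFiniteSimpleQuotient (Gf l₂) S → False) :
    ∀ S : Finset L, Function.Surjective (fun (g : G) (l : S) => ρ l.1 g) := by
  classical
  intro S
  induction S using Finset.induction_on with
  | empty => exact fun t => ⟨1, funext fun l => (Finset.notMem_empty l.1 l.2).elim⟩
  | @insert a S ha ih =>
    refine Finset.surjective_pi_insert (fun l => ρ l) (by_contra fun h => ?_)
    obtain ⟨T, _, f, g, hT, hf, hg⟩ := exists_common_simple_quotient_of_not_surjective_prod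
      (φ := MonoidHom.pi fun l : S => ρ l) ih (hsurj a) h
    obtain ⟨l, hl⟩ := exists_surjective_comp_mulSingle_of_isSimpleGroup f hf
    exact hind l a (fun hla => ha (hla ▸ l.2)) T (.of_surjective hl) (.of_surjective hg)
end
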